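/- arXiv:2303.14261 — 2 statements merged into one kernel-verified Lean document; each statement's English description precedes it below -/
import Mathlib

section
/- Let p : Fin n → ℝ be given by the geometric form p_i = a * b^{i+1} for constants a > 0, 0 < b, with ∑ p_i = 1 and ∑ (i+1) * p_i = μ. Then for any other probability distribution q on Fin n with q_i > 0 and ∑ (i+1) * q_i = μ, the Shannon entropy satisfies -∑ q_i log q_i ≤ -∑ p_i log p_i. -/
/-!
Gibbs' inequality says that the cross entropy `-∑ q log p` of positive weights `p` of total mass at
most that of `q` dominates the entropy `-∑ q log q`. When `log p` is an affine function
`α + β T` of a statistic `T`, the cross entropy `-∑ q log p = -(α ∑ q + β ∑ T q)` depends on `q`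
only through its mass and its `T`-mean, so it equals the entropy of `p` itself for every `q`
sharing these with `p`.
-/

open Real Finset

namespace Real

lemma mul_log_sub_mul_log_le_sub {p q : ℝ} (hp : 0 < p) (hq : 0 ≤ q) :
    q * log p - q * log q ≤ p - q := by
  rcases hq.eq_or_lt with rfl | hq
  · simpa using hp.le
  calc q * log p - q * log q = q * log (p / q) := by rw [log_div hp.ne' hq.ne']; ring
    _ ≤ q * (p / q - 1) := by gcongr; exact log_le_sub_one_of_pos (div_pos hp hq)
    _ = p - q := by field_simp

variable {ι : Type*} [Fintype ι]

theorem sum_mul_log_le_sum_mul_log {p q : ι → ℝ} (hp : ∀ i, 0 < p i) (hq : ∀ i, 0 ≤ q i)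
    (hpq : ∑ i, p i ≤ ∑ i, q i) :
    ∑ i, q i * log (p i) ≤ ∑ i, q i * log (q i) := by
  have hpointwise : ∑ i, (q i * log (p i) - q i * log (q i)) ≤ ∑ i, (p i - q i) :=
    sum_le_sum fun i _ ↦ mul_log_sub_mul_log_le_sub (hp i) (hq i)
  rw [sum_sub_distrib, sum_sub_distrib] at hpointwise
  linarith

lemma sum_mul_log_exp_affine (T f : ι → ℝ) (α β : ℝ) :
    ∑ i, f i * log (exp (α + β * T i)) = α * ∑ i, f i + β * ∑ i, T i * f i := by
  simp only [log_exp, mul_sum]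
  rw [← sum_add_distrib]
  exact sum_congr rfl fun i _ ↦ by ring

theorem neg_sum_mul_log_le_of_eq_exp_affine (T : ι → ℝ) (α β : ℝ) {p q : ι → ℝ}
    (hp : ∀ i, p i = exp (α + β * T i)) (hq : ∀ i, 0 ≤ q i)
    (hmass : ∑ i, q i = ∑ i, p i) (hmean : ∑ i, T i * q i = ∑ i, T i * p i) :
    -∑ i, q i * log (q i) ≤ -∑ i, p i * log (p i) := by
  obtain rfl : p = fun i ↦ exp (α + β * T i) := funext hp
  have hcross : ∑ i, q i * log (exp (α + β * T i)) =
      ∑ i, exp (α + β * T i) * log (exp (α + β * T i)) := by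
    rw [sum_mul_log_exp_affine, sum_mul_log_exp_affine, hmass, hmean]
  have hgibbs := sum_mul_log_le_sum_mul_log (fun i ↦ exp_pos _) hq hmass.ge
  linarith

end Real

theorem maxent_geometric
    (n : ℕ) (a b μ : ℝ) (ha : 0 < a) (hb : 0 < b)
    (p : Fin n → ℝ) (hp : ∀ i : Fin n, p i = a * b ^ (((i : ℕ) : ℝ) + 1))
    (hpsum : ∑ i, p i = 1)
    (hpmean : ∑ i : Fin n, (((i : ℕ) : ℝ) + 1) * p i = μ)
    (q : Fin n → ℝ) (hq : ∀ i, 0 < q i)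
    (hqsum : ∑ i, q i = 1)
    (hqmean : ∑ i : Fin n, (((i : ℕ) : ℝ) + 1) * q i = μ) :
    -∑ i, q i * Real.log (q i) ≤ -∑ i, p i * Real.log (p i) := by
  have hp_exp : ∀ i : Fin n, p i = exp (log a + log b * (((i : ℕ) : ℝ) + 1)) := fun i ↦ by
    rw [hp i, exp_add, exp_log ha, rpow_def_of_pos hb]
  exact neg_sum_mul_log_le_of_eq_exp_affine (fun i : Fin n ↦ ((i : ℕ) : ℝ) + 1) _ _ hp_exp
    (fun i ↦ (hq i).le) (hqsum.trans hpsum.symm) (hqmean.trans hpmean.symm)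
end

section
/- Let U and V be direct products of finite chains, W = U × V with the product order, and let F_U, G_U be grading functions on U and F_V, G_V grading functions on V with positive increments along covering relations. Define F(u,v) = F_U(u) + F_V(v) and G(u,v) = G_U(u) + G_V(v). Then D(F‖G)|_W = D(F_U‖G_U)|_U + D(F_V‖G_V)|_V, where each divergence is the minimum over maximal chains of the chainwise divergence -∑_k Δ_k F * log(Δ_k F / Δ_k G). -/
open Real Finset

/-- The set of values of the chainwise relative divergence
`-∑ₖ Δₖ F * log (Δₖ F / Δₖ G)` over all maximal chains
(sequences of length `L+1` of consecutive covering pairs from `bot` to `top`). -/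
def chainDivSet {α : Type*} [PartialOrder α] (L : ℕ) (bot top : α)
    (F G : α → ℝ) : Set ℝ :=
  {d | ∃ w : Fin (L + 1) → α,
    w 0 = bot ∧ w (Fin.last L) = top ∧
    (∀ k : Fin L, w k.castSucc ⋖ w k.succ) ∧
    d = -∑ k : Fin L,
      (F (w k.succ) - F (w k.castSucc)) *
        Real.log ((F (w k.succ) - F (w k.castSucc)) / (G (w k.succ) - G (w k.castSucc)))}

/-!
A maximal chain of `U × V` moves in exactly one coordinate at each step, so it is a shuffle of
a covering chain of `U` and one of `V`; by additive separability its divergence is the sum of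
theirs, and conversely any two such chains can be shuffled (all `U`-steps first, say). The
grading fixes the number of `U`-steps at `KU`. Hence the set of chain divergences of `W` is the
Minkowski sum of those of `U` and `V`, and the minimum of a sum of finite sets is the sum of the
minima.
-/

instance Fin.gradeOrderNat (n : ℕ) : GradeOrder ℕ (Fin n) :=
  GradeOrder.finToNat n

lemma Fin.grade_eq_val {n : ℕ} (x : Fin n) : grade ℕ x = x.val :=
  rfl

instance Pi.gradeOrderNat {ι : Type*} [Fintype ι] {α : ι → Type*} [∀ i, PartialOrder (α i)]
    [∀ i, GradeOrder ℕ (α i)] : GradeOrder ℕ (∀ i, α i) where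
  grade x := ∑ i, grade ℕ (x i)
  grade_strictMono x y h := by
    obtain ⟨hle, i, hi⟩ := Pi.lt_def.1 h
    exact Finset.sum_lt_sum (fun j _ => grade_mono (hle j)) ⟨i, mem_univ i, grade_strictMono hi⟩
  covBy_grade x y h := by
    classical
    obtain ⟨i, hi, hother⟩ := Pi.covBy_iff.1 h
    rw [Nat.covBy_iff_add_one_eq, ← add_sum_erase _ _ (mem_univ i),
      ← add_sum_erase _ _ (mem_univ i), ← Nat.covBy_iff_add_one_eq.1 (hi.grade ℕ),
      sum_congr rfl fun j hj => congrArg (grade ℕ) (hother j (ne_of_mem_erase hj))]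
    ring

lemma Pi.grade_eq_sum {ι : Type*} [Fintype ι] {α : ι → Type*} [∀ i, PartialOrder (α i)]
    [∀ i, GradeOrder ℕ (α i)] (x : ∀ i, α i) : grade ℕ x = ∑ i, grade ℕ (x i) :=
  rfl

def chainSums {α : Type*} [Preorder α] (L : ℕ) (a b : α) (g : α → α → ℝ) : Set ℝ :=
  {s | ∃ w : Fin (L + 1) → α, w 0 = a ∧ w (Fin.last L) = b ∧
    (∀ k : Fin L, w k.castSucc ⋖ w k.succ) ∧ s = ∑ k : Fin L, g (w k.castSucc) (w k.succ)}

section chainSums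

variable {α : Type*} {g : α → α → ℝ} {a b : α} {s : ℝ}

lemma mem_chainSums_zero [Preorder α] : s ∈ chainSums 0 a b g ↔ a = b ∧ s = 0 := by
  constructor
  · rintro ⟨w, rfl, rfl, -, rfl⟩
    exact ⟨rfl, by simp⟩
  · rintro ⟨rfl, rfl⟩
    exact ⟨fun _ => a, rfl, rfl, Fin.elim0, by simp⟩

lemma mem_chainSums_succ [Preorder α] {L : ℕ} :
    s ∈ chainSums (L + 1) a b g ↔ ∃ x, a ⋖ x ∧ ∃ t ∈ chainSums L x b g, s = g a x + t := by
  constructor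
  · rintro ⟨w, rfl, rfl, hw, rfl⟩
    refine ⟨w 1, hw 0, _, ⟨Fin.tail w, rfl, rfl, fun k => ?_, rfl⟩, ?_⟩
    · exact hw k.succ
    · rw [Fin.sum_univ_succ]
      rfl
  · rintro ⟨x, hax, t, ⟨w, rfl, rfl, hw, rfl⟩, rfl⟩
    refine ⟨Fin.cons a w, rfl, rfl, Fin.forall_fin_succ.2 ⟨by simpa using hax, fun k => ?_⟩, ?_⟩
    · simpa [← Fin.succ_castSucc] using hw k
    · simp [Fin.sum_univ_succ]

lemma mem_chainSums_map {β : Type*} [Preorder α] [Preorder β] {f : α → β}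
    (hf : ∀ x y, x ⋖ y → f x ⋖ f y) {g : β → β → ℝ} {L : ℕ}
    (h : s ∈ chainSums L a b fun x y => g (f x) (f y)) : s ∈ chainSums L (f a) (f b) g := by
  obtain ⟨w, rfl, rfl, hw, rfl⟩ := h
  exact ⟨f ∘ w, rfl, rfl, fun k => hf _ _ (hw k), rfl⟩

lemma chainSums_finite [Preorder α] [Finite α] (L : ℕ) : (chainSums L a b g).Finite := by
  refine (Set.finite_range fun w : Fin (L + 1) → α =>
    ∑ k : Fin L, g (w k.castSucc) (w k.succ)).subset ?_
  rintro s ⟨w, -, -, -, rfl⟩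
  exact ⟨w, rfl⟩

lemma grade_eq_add_of_mem_chainSums [PartialOrder α] [GradeOrder ℕ α] {L : ℕ}
    (h : s ∈ chainSums L a b g) : grade ℕ b = grade ℕ a + L := by
  induction L generalizing a s with
  | zero => obtain ⟨rfl, -⟩ := mem_chainSums_zero.1 h; rfl
  | succ L ih =>
    obtain ⟨x, hax, t, ht, -⟩ := mem_chainSums_succ.1 h
    rw [ih ht, ← Nat.covBy_iff_add_one_eq.1 (hax.grade ℕ)]
    ring

lemma chainSums_nonempty [PartialOrder α] [GradeOrder ℕ α] [WellFoundedGT α] {L : ℕ}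
    (hab : a ≤ b) (hL : grade ℕ b = grade ℕ a + L) : (chainSums L a b g).Nonempty := by
  obtain ⟨w, rfl, n, rfl, hw⟩ := exists_covBy_seq_of_wellFoundedLT_wellFoundedGT_of_le hab
  have hmem : ∑ k : Fin n, g (w k) (w (k + 1)) ∈ chainSums n (w 0) (w n) g :=
    ⟨fun k => w k, rfl, rfl, fun k => hw k k.isLt, rfl⟩
  obtain rfl : n = L := by have := grade_eq_add_of_mem_chainSums hmem; omega
  exact ⟨_, hmem⟩

end chainSums

open scoped Pointwise

section Prod

variable {β γ : Type*} [PartialOrder β] [PartialOrder γ] {g : β × γ → β × γ → ℝ}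
  {gβ : β → β → ℝ} {gγ : γ → γ → ℝ} {a b : β} {c d : γ}

lemma add_mem_chainSums_prod (hβ : ∀ a b c, g (a, c) (b, c) = gβ a b)
    (hγ : ∀ a c d, g (a, c) (a, d) = gγ c d) {M N : ℕ} {s t : ℝ}
    (hs : s ∈ chainSums M a b gβ) (ht : t ∈ chainSums N c d gγ) :
    s + t ∈ chainSums (M + N) (a, c) (b, d) g := by
  induction M generalizing a s with
  | zero =>
    obtain ⟨rfl, rfl⟩ := mem_chainSums_zero.1 hs
    rw [zero_add, zero_add]
    refine mem_chainSums_map (f := Prod.mk a) (fun x y => Prod.mk_covBy_mk_iff_right.2) ?_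
    simpa only [hγ] using ht
  | succ M ih =>
    obtain ⟨x, hax, s', hs', rfl⟩ := mem_chainSums_succ.1 hs
    rw [Nat.succ_add, mem_chainSums_succ]
    exact ⟨(x, c), Prod.mk_covBy_mk_iff_left.2 hax, s' + t, ih hs', by rw [hβ, add_assoc]⟩

lemma exists_mem_add_of_mem_chainSums_prod (hβ : ∀ a b c, g (a, c) (b, c) = gβ a b)
    (hγ : ∀ a c d, g (a, c) (a, d) = gγ c d) {L : ℕ} {s : ℝ}
    (h : s ∈ chainSums L (a, c) (b, d) g) :
    ∃ M N, M + N = L ∧ s ∈ chainSums M a b gβ + chainSums N c d gγ := by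
  induction L generalizing a c s with
  | zero =>
    obtain ⟨hac, rfl⟩ := mem_chainSums_zero.1 h
    obtain ⟨rfl, rfl⟩ := Prod.mk.inj hac
    exact ⟨0, 0, rfl, 0, mem_chainSums_zero.2 ⟨rfl, rfl⟩, 0, mem_chainSums_zero.2 ⟨rfl, rfl⟩,
      add_zero 0⟩
  | succ L ih =>
    obtain ⟨⟨x, y⟩, hcov, t, ht, rfl⟩ := mem_chainSums_succ.1 h
    obtain ⟨M, N, rfl, tβ, htβ, tγ, htγ, rfl⟩ := ih ht
    rcases Prod.mk_covBy_mk_iff.1 hcov with ⟨hax, rfl⟩ | ⟨hcy, rfl⟩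
    · exact ⟨M + 1, N, by ring, _, mem_chainSums_succ.2 ⟨x, hax, tβ, htβ, rfl⟩, tγ, htγ,
        by rw [hβ]; dsimp only; ring⟩
    · exact ⟨M, N + 1, by ring, tβ, htβ, _, mem_chainSums_succ.2 ⟨y, hcy, tγ, htγ, rfl⟩,
        by rw [hγ]; dsimp only; ring⟩

lemma chainSums_prod [GradeOrder ℕ β] [GradeOrder ℕ γ] (hβ : ∀ a b c, g (a, c) (b, c) = gβ a b)
    (hγ : ∀ a c d, g (a, c) (a, d) = gγ c d) {M N : ℕ}
    (hM : grade ℕ b = grade ℕ a + M) (hN : grade ℕ d = grade ℕ c + N) :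
    chainSums (M + N) (a, c) (b, d) g = chainSums M a b gβ + chainSums N c d gγ := by
  ext s
  constructor
  · intro h
    obtain ⟨M', N', hMN, tβ, htβ, tγ, htγ, rfl⟩ := exists_mem_add_of_mem_chainSums_prod hβ hγ h
    obtain rfl : M' = M := by have := grade_eq_add_of_mem_chainSums htβ; omega
    obtain rfl : N' = N := by omega
    exact ⟨tβ, htβ, tγ, htγ, rfl⟩
  · rintro ⟨tβ, htβ, tγ, htγ, rfl⟩
    exact add_mem_chainSums_prod hβ hγ htβ htγ

end Prod

noncomputable def divStep {α : Type*} (F G : α → ℝ) (x y : α) : ℝ :=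
  -((F y - F x) * Real.log ((F y - F x) / (G y - G x)))

lemma chainDivSet_eq_chainSums {α : Type*} [PartialOrder α] (L : ℕ) (a b : α) (F G : α → ℝ) :
    chainDivSet L a b F G = chainSums L a b (divStep F G) := by
  simp only [chainDivSet, chainSums, divStep, sum_neg_distrib]

section divStep

variable {β γ : Type*} {F G : β × γ → ℝ} {Fβ Gβ : β → ℝ} {Fγ Gγ : γ → ℝ}

lemma divStep_mk_mk_left (hF : ∀ u v, F (u, v) = Fβ u + Fγ v)
    (hG : ∀ u v, G (u, v) = Gβ u + Gγ v) (a b : β) (c : γ) :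
    divStep F G (a, c) (b, c) = divStep Fβ Gβ a b := by
  simp only [divStep, hF, hG, add_sub_add_right_eq_sub]

lemma divStep_mk_mk_right (hF : ∀ u v, F (u, v) = Fβ u + Fγ v)
    (hG : ∀ u v, G (u, v) = Gβ u + Gγ v) (a : β) (c d : γ) :
    divStep F G (a, c) (a, d) = divStep Fγ Gγ c d := by
  simp only [divStep, hF, hG, add_sub_add_left_eq_sub]

end divStep

lemma Pi.grade_last_eq_grade_zero_add {ι : Type*} [Fintype ι] (m : ι → ℕ) :
    grade ℕ (fun i => Fin.last (m i)) = grade ℕ (fun i => (0 : Fin (m i + 1))) + ∑ i, m i := by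
  simp [Pi.grade_eq_sum, Fin.grade_eq_val]

theorem relDiv_additively_separable_general
    (R Q : ℕ) (mU : Fin R → ℕ) (nV : Fin Q → ℕ)
    (FU GU : (∀ r, Fin (mU r + 1)) → ℝ) (FV GV : (∀ q, Fin (nV q + 1)) → ℝ)
    (KU KV : ℕ) (hKU : KU = ∑ r, mU r) (hKV : KV = ∑ q, nV q)
    (F G : ((∀ r, Fin (mU r + 1)) × (∀ q, Fin (nV q + 1))) → ℝ)
    (hF : ∀ u v, F (u, v) = FU u + FV v)
    (hG : ∀ u v, G (u, v) = GU u + GV v) :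
    sInf (chainDivSet (KU + KV)
        ((fun r => 0), (fun q => 0))
        ((fun r => Fin.last (mU r)), (fun q => Fin.last (nV q))) F G)
      = sInf (chainDivSet KU (fun r => 0) (fun r => Fin.last (mU r)) FU GU)
        + sInf (chainDivSet KV (fun q => 0) (fun q => Fin.last (nV q)) FV GV) := by
  subst hKU hKV
  simp only [chainDivSet_eq_chainSums]
  rw [chainSums_prod (divStep_mk_mk_left hF hG) (divStep_mk_mk_right hF hG)
    (Pi.grade_last_eq_grade_zero_add mU) (Pi.grade_last_eq_grade_zero_add nV)]
  exact csInf_add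
    (chainSums_nonempty (fun r => Fin.zero_le _) (Pi.grade_last_eq_grade_zero_add mU))
    (chainSums_finite _).bddBelow
    (chainSums_nonempty (fun q => Fin.zero_le _) (Pi.grade_last_eq_grade_zero_add nV))
    (chainSums_finite _).bddBelow

theorem relDiv_additively_separable
    (R Q : ℕ) (mU : Fin R → ℕ) (nV : Fin Q → ℕ)
    (FU GU : (∀ r, Fin (mU r + 1)) → ℝ) (FV GV : (∀ q, Fin (nV q + 1)) → ℝ)
    (hFU : ∀ u u', u < u' → FU u < FU u')
    (hGU : ∀ u u', u < u' → GU u < GU u')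
    (hFV : ∀ v v', v < v' → FV v < FV v')
    (hGV : ∀ v v', v < v' → GV v < GV v')
    (KU KV : ℕ) (hKU : KU = ∑ r, mU r) (hKV : KV = ∑ q, nV q)
    (F G : ((∀ r, Fin (mU r + 1)) × (∀ q, Fin (nV q + 1))) → ℝ)
    (hF : ∀ u v, F (u, v) = FU u + FV v)
    (hG : ∀ u v, G (u, v) = GU u + GV v) :
    sInf (chainDivSet (KU + KV)
        ((fun r => 0), (fun q => 0))
        ((fun r => Fin.last (mU r)), (fun q => Fin.last (nV q))) F G)
      = sInf (chainDivSet KU (fun r => 0) (fun r => Fin.last (mU r)) FU GU)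
        + sInf (chainDivSet KV (fun q => 0) (fun q => Fin.last (nV q)) FV GV) :=
  relDiv_additively_separable_general R Q mU nV FU GU FV GV KU KV hKU hKV F G hF hG
end
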